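/- arXiv:1605.00535 — 4 statements merged into one kernel-verified Lean document; each statement's English description precedes it below -/
import Mathlib

section
/- Let u be a Lebesgue integrable function on B_1 ⊂ ℝⁿ, n ≥ 1, and let δ : (0,1) → (0,∞) be monotonically increasing with lim_{r→0} δ(r) = 0. Assume that for every x̄ ∈ B_{1/4} there exist a(x̄) ∈ ℝ and b(x̄) ∈ ℝⁿ such that ⨍_{B_r(x̄)} |u(x) − [a(x̄) + b(x̄)·(x − x̄)]| dx ≤ r δ(r) for all 0 < r < 1/2. Then, after modifying u on a set of Lebesgue measure zero, u belongs to C^1(B_{1/4}), with u(x̄) = a(x̄) and ∇u(x̄) = b(x̄) for every x̄ ∈ B_{1/4}; moreover there is a dimensional constant C such that |∇u(x) − ∇u(y)| ≤ C δ(4|x − y|) for all x, y ∈ B_{1/4} with 0 < |x − y| < 1/8. -/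
/-!
Fix `x, y ∈ B_{1/4}` and `ρ = |x - y|`. On `B_ρ(x) ⊆ B_{2ρ}(y)` both affine approximations are
`ρ δ(2ρ)`-close to `u` in mean, so their difference `c + ⟪w, · - x⟫`, with `w = b x - b y` and
`c = a x - a y - ⟪b y, x - y⟫`, has mean absolute value `≲ ρ δ(2ρ)` there. The mean absolute value
of an affine function on a ball of radius `ρ` dominates both `ρ ‖w‖` and `|c|` up to dimensional
constants, whence `|b x - b y| ≲ δ(2ρ)` and `|c| ≲ ρ δ(2ρ)`: `a` is differentiable with the
continuous gradient `b`. Finally, at a Lebesgue point `x` of `u`,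
`|u x - a x| ≤ ⨍_{B_r(x)} |u - u x| + r δ(r) + r ‖b x‖ → 0`, so `u = a` almost everywhere.
-/

open MeasureTheory Metric Set Filter Module
open scoped Topology RealInnerProductSpace

section SetAverage

variable {α : Type*} [MeasurableSpace α] {μ : Measure α} {s t : Set α} {f g : α → ℝ}

theorem setAverage_mono_on (hs : MeasurableSet s) (hf : IntegrableOn f s μ)
    (hg : IntegrableOn g s μ) (h : ∀ x ∈ s, f x ≤ g x) :
    ⨍ x in s, f x ∂μ ≤ ⨍ x in s, g x ∂μ := by
  rw [setAverage_eq, setAverage_eq]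
  exact smul_le_smul_of_nonneg_left (setIntegral_mono_on hf hg hs h) (by positivity)

theorem setAverage_add (hf : IntegrableOn f s μ) (hg : IntegrableOn g s μ) :
    ⨍ x in s, (f x + g x) ∂μ = ⨍ x in s, f x ∂μ + ⨍ x in s, g x ∂μ := by
  simp only [setAverage_eq, integral_add hf hg, smul_add]

theorem le_setAverage_of_forall_le (hs : MeasurableSet s) (hμ₀ : μ s ≠ 0) (hμ : μ s ≠ ⊤)
    (hf : IntegrableOn f s μ) {m : ℝ} (h : ∀ x ∈ s, m ≤ f x) : m ≤ ⨍ x in s, f x ∂μ :=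
  calc m = ⨍ _ in s, m ∂μ := (setAverage_const hμ₀ hμ m).symm
    _ ≤ ⨍ x in s, f x ∂μ := setAverage_mono_on hs (integrableOn_const hμ) hf h

theorem measureReal_mul_setAverage_le_of_subset (hst : s ⊆ t) (hμ : μ t ≠ ⊤)
    (hg : IntegrableOn g t μ) (hg₀ : 0 ≤ g) :
    μ.real s * ⨍ x in s, g x ∂μ ≤ μ.real t * ⨍ x in t, g x ∂μ := by
  rw [← smul_eq_mul, measure_smul_setAverage _ (measure_ne_top_of_subset hst hμ), ← smul_eq_mul,
    measure_smul_setAverage _ hμ]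
  exact setIntegral_mono_set hg (Eventually.of_forall hg₀) hst.eventuallyLE

end SetAverage

section AddHaar

variable {E : Type*} [NormedAddCommGroup E] [NormedSpace ℝ E] [FiniteDimensional ℝ E]
  [MeasurableSpace E] [BorelSpace E] {μ : Measure E} [μ.IsAddHaarMeasure]

theorem measureReal_ball_of_pos (x : E) {r : ℝ} (hr : 0 < r) :
    μ.real (ball x r) = r ^ finrank ℝ E * μ.real (ball 0 1) := by
  rw [measureReal_def, Measure.addHaar_ball_of_pos μ x hr, ENNReal.toReal_mul,
    ENNReal.toReal_ofReal (by positivity), measureReal_def]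

theorem setAverage_ball_le_of_subset {g : E → ℝ} (hg₀ : 0 ≤ g) {x y : E} {r R : ℝ}
    (hg : IntegrableOn g (ball y R) μ) (hr : 0 < r) (hsub : ball x r ⊆ ball y R) :
    ⨍ z in ball x r, g z ∂μ ≤ (R / r) ^ finrank ℝ E * ⨍ z in ball y R, g z ∂μ := by
  have hR : 0 < R := pos_of_mem_ball (hsub (mem_ball_self hr))
  have hV : 0 < μ.real (ball x r) :=
    ENNReal.toReal_pos (measure_ball_pos μ x hr).ne' measure_ball_lt_top.ne
  refine le_of_mul_le_mul_left ?_ hV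
  calc μ.real (ball x r) * ⨍ z in ball x r, g z ∂μ
      ≤ μ.real (ball y R) * ⨍ z in ball y R, g z ∂μ :=
        measureReal_mul_setAverage_le_of_subset hsub measure_ball_lt_top.ne hg hg₀
    _ = μ.real (ball x r) * ((R / r) ^ finrank ℝ E * ⨍ z in ball y R, g z ∂μ) := by
        rw [measureReal_ball_of_pos y hR, measureReal_ball_of_pos x hr, div_pow]
        field_simp

theorem ae_tendsto_setAverage_ball_abs_sub [Nontrivial E] {f : E → ℝ}
    (hf : LocallyIntegrable f μ) :
    ∀ᵐ x ∂μ, Tendsto (fun r => ⨍ z in ball x r, |f z - f x| ∂μ) (𝓝[>] 0) (𝓝 0) := by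
  filter_upwards [IsUnifLocDoublingMeasure.ae_tendsto_average_norm_sub (μ := μ) hf 1] with x hx
  have hclosed := hx (fun _ => x) id tendsto_id
    (eventually_nhdsWithin_of_forall fun r hr => by simpa using (le_of_lt hr))
  refine hclosed.congr' (eventually_nhdsWithin_of_forall fun r _ => ?_)
  have hball : ball x r =ᵐ[μ] closedBall x r :=
    ae_eq_of_subset_of_measure_ge ball_subset_closedBall
      (Measure.addHaar_closedBall_eq_addHaar_ball μ x r).le measurableSet_ball.nullMeasurableSet
      measure_closedBall_lt_top.ne
  simp only [id, setAverage_congr hball, Real.norm_eq_abs]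

end AddHaar

section Affine

variable {E : Type*} [NormedAddCommGroup E] [InnerProductSpace ℝ E] [FiniteDimensional ℝ E]
  [MeasurableSpace E] [BorelSpace E] {μ : Measure E} [μ.IsAddHaarMeasure]

theorem integrableOn_ball_affine (c : ℝ) (w x y : E) (r : ℝ) :
    IntegrableOn (fun z => c + ⟪w, z - x⟫) (ball y r) μ :=
  ((continuous_const.add (continuous_const.inner (continuous_id.sub continuous_const))
    ).locallyIntegrable.integrableOn_isCompact (isCompact_closedBall y r)).mono_set
    ball_subset_closedBall

theorem IntegrableOn.abs_sub_affine {u : E → ℝ} {y : E} {r : ℝ} (hu : IntegrableOn u (ball y r) μ)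
    (c : ℝ) (w x : E) : IntegrableOn (fun z => |u z - (c + ⟪w, z - x⟫)|) (ball y r) μ :=
  (hu.sub (integrableOn_ball_affine c w x y r)).abs

theorem abs_le_setAverage_abs_affine_add (c : ℝ) (w x : E) {ρ : ℝ} (hρ : 0 < ρ) :
    |c| ≤ ⨍ z in ball x ρ, |c + ⟪w, z - x⟫| ∂μ + ρ * ‖w‖ := by
  suffices |c| - ρ * ‖w‖ ≤ ⨍ z in ball x ρ, |c + ⟪w, z - x⟫| ∂μ by linarith
  refine le_setAverage_of_forall_le measurableSet_ball (measure_ball_pos μ x hρ).ne'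
    measure_ball_lt_top.ne (integrableOn_ball_affine c w x x ρ).abs fun z hz => ?_
  have hinner : |⟪w, z - x⟫| ≤ ρ * ‖w‖ := by
    calc |⟪w, z - x⟫| ≤ ‖w‖ * ‖z - x‖ := abs_real_inner_le_norm w _
      _ ≤ ‖w‖ * ρ := by gcongr; exact (mem_ball_iff_norm.1 hz).le
      _ = ρ * ‖w‖ := mul_comm _ _
  have htri : |c| ≤ |c + ⟪w, z - x⟫| + |⟪w, z - x⟫| := by
    simpa only [add_sub_cancel_right] using abs_sub (c + ⟪w, z - x⟫) ⟪w, z - x⟫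
  linarith

/-- On the ball of radius `ρ / 4` centred at distance `ρ / 2` from `x` in the direction of `w`,
the affine function is at least `ρ ‖w‖ / 4`; passing to the average over `B_ρ(x)` costs the
volume ratio `4 ^ finrank ℝ E`. -/
theorem mul_norm_le_setAverage_abs_affine_of_nonneg {c : ℝ} (hc : 0 ≤ c) (w x : E) {ρ : ℝ}
    (hρ : 0 < ρ) :
    ρ * ‖w‖ ≤ 4 ^ (finrank ℝ E + 1) * ⨍ z in ball x ρ, |c + ⟪w, z - x⟫| ∂μ := by
  set v : E := (ρ / (2 * ‖w‖)) • w
  have hv : ⟪w, v⟫ = ρ * ‖w‖ / 2 := by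
    rcases eq_or_ne w 0 with rfl | hw
    · simp
    · rw [real_inner_smul_right, real_inner_self_eq_norm_sq]
      field_simp
  have hvnorm : ‖v‖ ≤ ρ / 2 := by
    rcases eq_or_ne w 0 with rfl | hw
    · simp only [v, smul_zero, norm_zero]
      positivity
    · rw [norm_smul, Real.norm_of_nonneg (by positivity)]
      exact (by field_simp : ρ / (2 * ‖w‖) * ‖w‖ = ρ / 2).le
  have hsub : ball (x + v) (ρ / 4) ⊆ ball x ρ :=
    ball_subset_ball' (by rw [dist_eq_norm, add_sub_cancel_left]; linarith)
  have hlow : ∀ z ∈ ball (x + v) (ρ / 4), ρ * ‖w‖ / 4 ≤ |c + ⟪w, z - x⟫| := by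
    intro z hz
    have hz' : ‖z - (x + v)‖ ≤ ρ / 4 := (mem_ball_iff_norm.1 hz).le
    have hsplit : ⟪w, z - x⟫ = ⟪w, v⟫ + ⟪w, z - (x + v)⟫ := by
      rw [← inner_add_right]; congr 1; abel
    have herr : |⟪w, z - (x + v)⟫| ≤ ‖w‖ * (ρ / 4) :=
      (abs_real_inner_le_norm _ _).trans (by gcongr)
    have : ρ * ‖w‖ / 4 ≤ c + ⟪w, z - x⟫ := by linarith [neg_abs_le ⟪w, z - (x + v)⟫]
    exact this.trans (le_abs_self _)
  have hint : IntegrableOn (fun z => |c + ⟪w, z - x⟫|) (ball x ρ) μ :=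
    (integrableOn_ball_affine c w x x ρ).abs
  calc ρ * ‖w‖ = 4 * (ρ * ‖w‖ / 4) := by ring
    _ ≤ 4 * ⨍ z in ball (x + v) (ρ / 4), |c + ⟪w, z - x⟫| ∂μ := by
        gcongr
        exact le_setAverage_of_forall_le measurableSet_ball
          (measure_ball_pos μ _ (by positivity)).ne' measure_ball_lt_top.ne (hint.mono_set hsub)
          hlow
    _ ≤ 4 * ((ρ / (ρ / 4)) ^ finrank ℝ E * ⨍ z in ball x ρ, |c + ⟪w, z - x⟫| ∂μ) := by
        gcongr
        exact setAverage_ball_le_of_subset (fun _ => abs_nonneg _) hint (by positivity) hsub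
    _ = 4 ^ (finrank ℝ E + 1) * ⨍ z in ball x ρ, |c + ⟪w, z - x⟫| ∂μ := by
        rw [show ρ / (ρ / 4) = 4 by field_simp, pow_succ]
        ring

theorem mul_norm_le_setAverage_abs_affine (c : ℝ) (w x : E) {ρ : ℝ} (hρ : 0 < ρ) :
    ρ * ‖w‖ ≤ 4 ^ (finrank ℝ E + 1) * ⨍ z in ball x ρ, |c + ⟪w, z - x⟫| ∂μ := by
  rcases le_total 0 c with hc | hc
  · exact mul_norm_le_setAverage_abs_affine_of_nonneg hc w x hρ
  · have := mul_norm_le_setAverage_abs_affine_of_nonneg (μ := μ) (neg_nonneg.2 hc) (-w) x hρ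
    simpa only [norm_neg, inner_neg_left, ← neg_add, abs_neg] using this

end Affine

theorem hasFDerivAt_of_norm_sub_le {E F : Type*} [NormedAddCommGroup E] [NormedSpace ℝ E]
    [NormedAddCommGroup F] [NormedSpace ℝ F] {f : E → F} {f' : E →L[ℝ] F} {x : E} {ω : ℝ → ℝ}
    (hω : Tendsto ω (𝓝[>] 0) (𝓝 0))
    (h : ∀ᶠ y in 𝓝 x, ‖f y - f x - f' (y - x)‖ ≤ ‖y - x‖ * ω ‖y - x‖) :
    HasFDerivAt f f' x := by
  rw [hasFDerivAt_iff_isLittleO, Asymptotics.isLittleO_iff]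
  intro ε hε
  obtain ⟨η, hη, hωη⟩ := mem_nhdsGT_iff_exists_Ioo_subset.1 (hω (Iio_mem_nhds hε))
  filter_upwards [h, ball_mem_nhds x hη] with y hy hyη
  refine hy.trans ?_
  rcases (norm_nonneg (y - x)).eq_or_lt with h0 | hpos
  · simp [← h0]
  · exact mul_le_mul_of_nonneg_left (hωη ⟨hpos, mem_ball_iff_norm.1 hyη⟩).le hpos.le |>.trans_eq
      (mul_comm _ _)

theorem continuousAt_of_norm_sub_le {E F : Type*} [NormedAddCommGroup E] [NormedAddCommGroup F]
    {f : E → F} {x : E} {ω : ℝ → ℝ} (hω : Tendsto ω (𝓝[>] 0) (𝓝 0))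
    (h : ∀ᶠ y in 𝓝 x, y ≠ x → ‖f y - f x‖ ≤ ω ‖y - x‖) : ContinuousAt f x := by
  rw [Metric.continuousAt_iff']
  intro ε hε
  obtain ⟨η, hη, hωη⟩ := mem_nhdsGT_iff_exists_Ioo_subset.1 (hω (Iio_mem_nhds hε))
  filter_upwards [h, ball_mem_nhds x hη] with y hy hyη
  rcases eq_or_ne y x with rfl | hyx
  · simpa using hε
  · rw [dist_eq_norm]
    exact (hy hyx).trans_lt (hωη ⟨norm_pos_iff.2 (sub_ne_zero.2 hyx), mem_ball_iff_norm.1 hyη⟩)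

theorem Filter.Tendsto.const_mul_comp_two_mul {δ : ℝ → ℝ} (hδ : Tendsto δ (𝓝[>] 0) (𝓝 0))
    (K : ℝ) :
    Tendsto (fun t => K * δ (2 * t)) (𝓝[>] 0) (𝓝 0) := by
  have h2 : Tendsto (fun t : ℝ => 2 * t) (𝓝[>] 0) (𝓝[>] 0) :=
    tendsto_nhdsWithin_of_tendsto_nhds_of_eventually_within _
      (by simpa using
        tendsto_nhdsWithin_of_tendsto_nhds ((continuous_const_mul (2 : ℝ)).tendsto 0))
      (eventually_nhdsWithin_of_forall fun t ht => mem_Ioi.2 (mul_pos two_pos ht))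
  simpa using (hδ.comp h2).const_mul K

theorem contDiffOn_one_of_hasFDerivAt {E F : Type*} [NormedAddCommGroup E] [NormedSpace ℝ E]
    [NormedAddCommGroup F] [NormedSpace ℝ F] {f : E → F} {f' : E → E →L[ℝ] F} {s : Set E}
    (hs : IsOpen s) (hf : ∀ x ∈ s, HasFDerivAt f (f' x) x) (hf' : ContinuousOn f' s) :
    ContDiffOn ℝ 1 f s := by
  rw [← zero_add 1, contDiffOn_succ_iff_fderiv_of_isOpen hs]
  refine ⟨fun x hx => (hf x hx).differentiableAt.differentiableWithinAt, by simp, ?_⟩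
  exact contDiffOn_zero.2 (hf'.congr fun x hx => (hf x hx).fderiv)

def IsAffineApproxWithRate {E : Type*} [NormedAddCommGroup E] [InnerProductSpace ℝ E]
    [MeasurableSpace E] (μ : Measure E) (u : E → ℝ) (δ : ℝ → ℝ) (a : E → ℝ) (b : E → E) : Prop :=
  ∀ xb ∈ ball (0 : E) (1/4 : ℝ), ∀ r ∈ Ioo (0:ℝ) (1/2 : ℝ),
    ⨍ x in ball xb r, |u x - (a xb + ⟪b xb, x - xb⟫)| ∂μ ≤ r * δ r

namespace IsAffineApproxWithRate

variable {E : Type*} [NormedAddCommGroup E] [InnerProductSpace ℝ E] [FiniteDimensional ℝ E]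
  [MeasurableSpace E] [BorelSpace E] {μ : Measure E} [μ.IsAddHaarMeasure]
  {u : E → ℝ} {δ : ℝ → ℝ} {a : E → ℝ} {b : E → E} {x y : E}

theorem setAverage_abs_sub_le (h : IsAffineApproxWithRate μ u δ a b)
    (hu : IntegrableOn u (ball 0 1) μ) (hδ : MonotoneOn δ (Ioo 0 1))
    (hx : x ∈ ball (0 : E) (1/4)) (hy : y ∈ ball (0 : E) (1/4)) (hxy : x ≠ y)
    (hd : dist x y < 1/4) :
    ⨍ z in ball x (dist x y), |(a x - a y - ⟪b y, x - y⟫) + ⟪b x - b y, z - x⟫| ∂μ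
      ≤ (1 + 2 ^ (finrank ℝ E + 1)) * (dist x y * δ (2 * dist x y)) := by
  set ρ := dist x y
  have hρ : 0 < ρ := dist_pos.2 hxy
  have hy' : dist y 0 < 1/4 := hy
  have hxy2 : ball x ρ ⊆ ball y (2 * ρ) := ball_subset_ball' (by linarith)
  have hy1 : ball y (2 * ρ) ⊆ ball 0 1 := ball_subset_ball' (by linarith)
  have hIy : IntegrableOn (fun z => |u z - (a y + ⟪b y, z - y⟫)|) (ball y (2 * ρ)) μ :=
    IntegrableOn.abs_sub_affine (hu.mono_set hy1) _ _ _
  have hIx : IntegrableOn (fun z => |u z - (a x + ⟪b x, z - x⟫)|) (ball x ρ) μ :=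
    IntegrableOn.abs_sub_affine (hu.mono_set (hxy2.trans hy1)) _ _ _
  calc ⨍ z in ball x ρ, |(a x - a y - ⟪b y, x - y⟫) + ⟪b x - b y, z - x⟫| ∂μ
      ≤ ⨍ z in ball x ρ, (|u z - (a x + ⟪b x, z - x⟫)| + |u z - (a y + ⟪b y, z - y⟫)|) ∂μ := by
        refine setAverage_mono_on measurableSet_ball (integrableOn_ball_affine _ _ _ _ _).abs
          (hIx.add (hIy.mono_set hxy2)) fun z _ => ?_
        have : (a x - a y - ⟪b y, x - y⟫) + ⟪b x - b y, z - x⟫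
            = (u z - (a y + ⟪b y, z - y⟫)) - (u z - (a x + ⟪b x, z - x⟫)) := by
          simp only [inner_sub_left, inner_sub_right]; ring
        rw [this]
        exact (abs_sub _ _).trans_eq (add_comm _ _)
    _ = ⨍ z in ball x ρ, |u z - (a x + ⟪b x, z - x⟫)| ∂μ
          + ⨍ z in ball x ρ, |u z - (a y + ⟪b y, z - y⟫)| ∂μ :=
        setAverage_add hIx (hIy.mono_set hxy2)
    _ ≤ ρ * δ ρ + (2 * ρ / ρ) ^ finrank ℝ E * (2 * ρ * δ (2 * ρ)) := by
        refine add_le_add (h x hx ρ ⟨hρ, by linarith⟩)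
          ((setAverage_ball_le_of_subset (fun _ => abs_nonneg _) hIy hρ hxy2).trans ?_)
        gcongr
        exact h y hy (2 * ρ) ⟨by linarith, by linarith⟩
    _ ≤ ρ * δ (2 * ρ) + 2 ^ finrank ℝ E * (2 * ρ * δ (2 * ρ)) := by
        rw [mul_div_cancel_right₀ _ hρ.ne']
        gcongr
        exact hδ ⟨hρ, by linarith⟩ ⟨by linarith, by linarith⟩ (by linarith)
    _ = (1 + 2 ^ (finrank ℝ E + 1)) * (ρ * δ (2 * ρ)) := by ring

theorem norm_sub_le (h : IsAffineApproxWithRate μ u δ a b)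
    (hu : IntegrableOn u (ball 0 1) μ) (hδ : MonotoneOn δ (Ioo 0 1))
    (hx : x ∈ ball (0 : E) (1/4)) (hy : y ∈ ball (0 : E) (1/4)) (hxy : x ≠ y)
    (hd : dist x y < 1/4) :
    ‖b x - b y‖ ≤ 4 ^ (finrank ℝ E + 1) * (1 + 2 ^ (finrank ℝ E + 1)) * δ (2 * dist x y) := by
  have hρ : 0 < dist x y := dist_pos.2 hxy
  refine le_of_mul_le_mul_left ?_ hρ
  calc dist x y * ‖b x - b y‖
      ≤ 4 ^ (finrank ℝ E + 1) * ⨍ z in ball x (dist x y),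
          |(a x - a y - ⟪b y, x - y⟫) + ⟪b x - b y, z - x⟫| ∂μ :=
        mul_norm_le_setAverage_abs_affine _ _ _ hρ
    _ ≤ 4 ^ (finrank ℝ E + 1) *
          ((1 + 2 ^ (finrank ℝ E + 1)) * (dist x y * δ (2 * dist x y))) := by
        gcongr
        exact h.setAverage_abs_sub_le hu hδ hx hy hxy hd
    _ = dist x y *
          (4 ^ (finrank ℝ E + 1) * (1 + 2 ^ (finrank ℝ E + 1)) * δ (2 * dist x y)) := by
        ring

theorem abs_sub_sub_inner_le (h : IsAffineApproxWithRate μ u δ a b)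
    (hu : IntegrableOn u (ball 0 1) μ) (hδ : MonotoneOn δ (Ioo 0 1))
    (hx : x ∈ ball (0 : E) (1/4)) (hy : y ∈ ball (0 : E) (1/4)) (hd : dist x y < 1/4) :
    |a x - a y - ⟪b y, x - y⟫|
      ≤ (1 + 4 ^ (finrank ℝ E + 1)) * (1 + 2 ^ (finrank ℝ E + 1)) *
          (dist x y * δ (2 * dist x y)) := by
  rcases eq_or_ne x y with rfl | hxy
  · simp
  have hρ : 0 < dist x y := dist_pos.2 hxy
  have hconst :=
    abs_le_setAverage_abs_affine_add (μ := μ) (a x - a y - ⟪b y, x - y⟫) (b x - b y) x hρ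
  have havg := h.setAverage_abs_sub_le hu hδ hx hy hxy hd
  have hslope := mul_le_mul_of_nonneg_left (h.norm_sub_le hu hδ hx hy hxy hd) hρ.le
  linarith

theorem hasFDerivAt (h : IsAffineApproxWithRate μ u δ a b) (hu : IntegrableOn u (ball 0 1) μ)
    (hδ : MonotoneOn δ (Ioo 0 1)) (hδ₀ : Tendsto δ (𝓝[>] 0) (𝓝 0))
    (hy : y ∈ ball (0 : E) (1/4)) : HasFDerivAt a (innerSL ℝ (b y)) y := by
  refine hasFDerivAt_of_norm_sub_le
    (hδ₀.const_mul_comp_two_mul ((1 + 4 ^ (finrank ℝ E + 1)) * (1 + 2 ^ (finrank ℝ E + 1)))) ?_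
  filter_upwards [isOpen_ball.mem_nhds hy, ball_mem_nhds y (by norm_num : (0:ℝ) < 1/4)]
    with x hx hxy
  rw [innerSL_apply_apply, Real.norm_eq_abs, ← dist_eq_norm]
  exact (h.abs_sub_sub_inner_le hu hδ hx hy hxy).trans_eq (by ring)

theorem continuousOn (h : IsAffineApproxWithRate μ u δ a b) (hu : IntegrableOn u (ball 0 1) μ)
    (hδ : MonotoneOn δ (Ioo 0 1)) (hδ₀ : Tendsto δ (𝓝[>] 0) (𝓝 0)) :
    ContinuousOn b (ball (0 : E) (1/4)) := fun y hy =>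
  (continuousAt_of_norm_sub_le
    (hδ₀.const_mul_comp_two_mul (4 ^ (finrank ℝ E + 1) * (1 + 2 ^ (finrank ℝ E + 1)))) (by
      filter_upwards [isOpen_ball.mem_nhds hy, ball_mem_nhds y (by norm_num : (0:ℝ) < 1/4)]
        with x hx hxy hne
      simpa only [dist_eq_norm] using h.norm_sub_le hu hδ hx hy hne hxy)).continuousWithinAt

theorem abs_sub_le_setAverage (h : IsAffineApproxWithRate μ u δ a b)
    (hu : IntegrableOn u (ball 0 1) μ) (hx : x ∈ ball (0 : E) (1/4)) {r : ℝ}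
    (hr : r ∈ Ioo (0 : ℝ) (1/2)) :
    |a x - u x| ≤ ⨍ z in ball x r, |u z - u x| ∂μ + r * δ r + r * ‖b x‖ := by
  have hx' : dist x 0 < 1/4 := hx
  have hu' : IntegrableOn u (ball x r) μ := hu.mono_set (ball_subset_ball' (by linarith [hr.2]))
  have hIu : IntegrableOn (fun z => |u z - u x|) (ball x r) μ :=
    (hu'.sub (integrableOn_const measure_ball_lt_top.ne)).abs
  have hIa := IntegrableOn.abs_sub_affine hu' (a x) (b x) x
  calc |a x - u x| ≤ ⨍ z in ball x r, |a x - u x + ⟪b x, z - x⟫| ∂μ + r * ‖b x‖ :=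
        abs_le_setAverage_abs_affine_add _ _ _ hr.1
    _ ≤ ⨍ z in ball x r, (|u z - u x| + |u z - (a x + ⟪b x, z - x⟫)|) ∂μ + r * ‖b x‖ := by
        gcongr 1
        refine setAverage_mono_on measurableSet_ball (integrableOn_ball_affine _ _ _ _ _).abs
          (hIu.add hIa) fun z _ => ?_
        have : a x - u x + ⟪b x, z - x⟫ = (u z - u x) - (u z - (a x + ⟪b x, z - x⟫)) := by ring
        rw [this]
        exact abs_sub _ _
    _ ≤ ⨍ z in ball x r, |u z - u x| ∂μ + r * δ r + r * ‖b x‖ := by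
        rw [setAverage_add hIu hIa]
        gcongr
        exact h x hx r hr

theorem ae_eq [Nontrivial E] (h : IsAffineApproxWithRate μ u δ a b)
    (hu : IntegrableOn u (ball 0 1) μ) (hδ₀ : Tendsto δ (𝓝[>] 0) (𝓝 0)) :
    ∀ᵐ x ∂μ, x ∈ ball (0 : E) (1/4) → u x = a x := by
  set f := (ball (0 : E) 1).indicator u
  have hf : LocallyIntegrable f μ :=
    ((integrable_indicator_iff measurableSet_ball).2 hu).locallyIntegrable
  filter_upwards [ae_tendsto_setAverage_ball_abs_sub hf] with x hlim hx
  have hx' : dist x 0 < 1/4 := hx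
  have hbound : ∀ᶠ r in 𝓝[>] 0,
      |a x - u x| ≤ ⨍ z in ball x r, |f z - f x| ∂μ + r * δ r + r * ‖b x‖ := by
    filter_upwards [Ioo_mem_nhdsGT (by norm_num : (0:ℝ) < 1/2)] with r hr
    have hsub : ball x r ⊆ ball 0 1 := ball_subset_ball' (by linarith [hr.2])
    rw [setAverage_congr_fun measurableSet_ball (Eventually.of_forall fun z hz => by
      rw [show f z = u z from indicator_of_mem (hsub hz) u,
        show f x = u x from indicator_of_mem (hsub (mem_ball_self hr.1)) u])]
    exact h.abs_sub_le_setAverage hu hx hr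
  have hid : Tendsto (fun r : ℝ => r) (𝓝[>] 0) (𝓝 0) :=
    tendsto_nhdsWithin_of_tendsto_nhds tendsto_id
  have hto : Tendsto (fun r => ⨍ z in ball x r, |f z - f x| ∂μ + r * δ r + r * ‖b x‖)
      (𝓝[>] 0) (𝓝 0) := by
    simpa using (hlim.add (hid.mul hδ₀)).add (hid.mul_const ‖b x‖)
  exact (sub_eq_zero.1 (abs_nonpos_iff.1 (ge_of_tendsto hto hbound))).symm

end IsAffineApproxWithRate

/-- If `u` is integrable on `B₁ ⊂ ℝⁿ`, `δ : (0,1) → (0,∞)` is increasing with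
`δ(r) → 0` as `r → 0`, and for every `xb ∈ B_{1/4}` there are `a(xb) ∈ ℝ`, `b(xb) ∈ ℝⁿ` with
`⨍_{B_r(xb)} |u - [a(xb) + b(xb)·(x - xb)]| ≤ r δ(r)` for all `0 < r < 1/2`, then after a
modification on a null set `u ∈ C¹(B_{1/4})` with `u ≡ a`, `∇u ≡ b`, and
`|∇u(x) - ∇u(y)| ≤ C δ(4|x-y|)` for a dimensional constant `C`. -/
theorem c1_regularity_from_affine_approximation
    (n : ℕ) (hn : 1 ≤ n) :
    ∃ C : ℝ, 0 < C ∧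
      ∀ (u : EuclideanSpace ℝ (Fin n) → ℝ),
        IntegrableOn u (ball (0 : EuclideanSpace ℝ (Fin n)) 1) →
        ∀ (δ : ℝ → ℝ),
          (∀ r ∈ Ioo (0:ℝ) 1, 0 < δ r) →
          (∀ r s : ℝ, 0 < r → r ≤ s → s < 1 → δ r ≤ δ s) →
          Tendsto δ (𝓝[>] (0:ℝ)) (𝓝 0) →
          ∀ (a : EuclideanSpace ℝ (Fin n) → ℝ)
            (b : EuclideanSpace ℝ (Fin n) → EuclideanSpace ℝ (Fin n)),
            (∀ xb ∈ ball (0 : EuclideanSpace ℝ (Fin n)) (1/4 : ℝ), ∀ r ∈ Ioo (0:ℝ) (1/2 : ℝ),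
              ⨍ x in ball xb r, |u x - (a xb + ⟪b xb, x - xb⟫)| ≤ r * δ r) →
            ∃ v : EuclideanSpace ℝ (Fin n) → ℝ,
              ContDiffOn ℝ 1 v (ball (0 : EuclideanSpace ℝ (Fin n)) (1/4 : ℝ)) ∧
              (∀ᵐ x ∂(volume : Measure (EuclideanSpace ℝ (Fin n))),
                x ∈ ball (0 : EuclideanSpace ℝ (Fin n)) (1/4 : ℝ) → u x = v x) ∧
              (∀ xb ∈ ball (0 : EuclideanSpace ℝ (Fin n)) (1/4 : ℝ),
                v xb = a xb ∧ ∀ y : EuclideanSpace ℝ (Fin n), fderiv ℝ v xb y = ⟪b xb, y⟫) ∧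
              (∀ x ∈ ball (0 : EuclideanSpace ℝ (Fin n)) (1/4 : ℝ),
                ∀ y ∈ ball (0 : EuclideanSpace ℝ (Fin n)) (1/4 : ℝ),
                  x ≠ y → dist x y < 1/8 → ‖b x - b y‖ ≤ C * δ (4 * dist x y)) := by
  have : Nontrivial (EuclideanSpace ℝ (Fin n)) :=
    Module.nontrivial_of_finrank_pos (R := ℝ) (by rw [finrank_euclideanSpace_fin]; omega)
  refine ⟨4 ^ (n + 1) * (1 + 2 ^ (n + 1)), by positivity, ?_⟩
  intro u hu δ _ hδmono hδ₀ a b happrox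
  have h : IsAffineApproxWithRate volume u δ a b := happrox
  have hδ : MonotoneOn δ (Ioo 0 1) := fun r hr s hs hrs => hδmono r s hr.1 hrs hs.2
  have hderiv := fun y (hy : y ∈ ball _ _) => h.hasFDerivAt hu hδ hδ₀ hy
  refine ⟨a, contDiffOn_one_of_hasFDerivAt isOpen_ball hderiv
    ((innerSL ℝ).continuous.comp_continuousOn (h.continuousOn hu hδ hδ₀)), h.ae_eq hu hδ₀,
    fun xb hxb => ⟨rfl, fun y => by rw [(hderiv xb hxb).fderiv, innerSL_apply_apply]⟩,
    fun x hx y hy hxy hd => ?_⟩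
  calc ‖b x - b y‖ ≤ 4 ^ (n + 1) * (1 + 2 ^ (n + 1)) * δ (2 * dist x y) := by
        simpa only [finrank_euclideanSpace_fin] using h.norm_sub_le hu hδ hx hy hxy (by linarith)
    _ ≤ 4 ^ (n + 1) * (1 + 2 ^ (n + 1)) * δ (4 * dist x y) := by
        have hρ : 0 < dist x y := dist_pos.2 hxy
        gcongr
        exact hδ ⟨by linarith, by linarith⟩ ⟨by linarith, by linarith⟩ (by linarith)
end

section
/- Let u : B_1 → ℝ (B_1 ⊂ ℝⁿ, n ≥ 1) and let δ : (0,1) → (0,∞) be monotonically increasing with lim_{r→0} δ(r) = 0. Assume that for every x̄ ∈ B_{1/4} there is b(x̄) ∈ ℝⁿ such that ⨍_{B_r(x̄)} |u(x) − [u(x̄) + b(x̄)·(x − x̄)]| dx ≤ r δ(r) for all 0 < r < 1/2. Then there is a dimensional constant C such that for all x̄, ȳ ∈ B_{1/4} with 0 < |x̄ − ȳ| < 1/8, |u(ȳ) − [u(x̄) + b(x̄)·(ȳ − x̄)]| ≤ C |ȳ − x̄| δ(4|ȳ − x̄|). -/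
/-!
Write `R_x(z) = u(z) - u(x) - b(x)·(z - x)` and `ρ = |y - x|`. The difference `R_x - R_y` is
affine, equal to `R_x(y)` at `y`, so by symmetry of the ball its mean over `B_ρ(y)` is `R_x(y)`.
Hence `|R_x(y)| ≤ ⨍_{B_ρ(y)} |R_x| + ⨍_{B_ρ(y)} |R_y|`, and since `B_ρ(y) ⊆ B_{2ρ}(x)` the first
average is at most `2ⁿ ⨍_{B_{2ρ}(x)} |R_x|`. The hypothesis and the monotonicity of `δ` then give
`|R_x(y)| ≤ (2ⁿ⁺¹ + 1) ρ δ(4ρ)`.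
-/

open MeasureTheory Metric Set Filter Module
open scoped Topology RealInnerProductSpace

section Average

variable {α : Type*} [MeasurableSpace α] {μ : Measure α} {s t : Set α} {f g : α → ℝ}

theorem abs_setAverage_le_setAverage_abs : |⨍ x in s, f x ∂μ| ≤ ⨍ x in s, |f x| ∂μ := by
  rw [setAverage_eq, setAverage_eq, smul_eq_mul, smul_eq_mul, abs_mul, abs_inv,
    abs_of_nonneg measureReal_nonneg]
  exact mul_le_mul_of_nonneg_left abs_integral_le_integral_abs (inv_nonneg.2 measureReal_nonneg)

theorem setAverage_abs_sub_le (hf : IntegrableOn f s μ) (hg : IntegrableOn g s μ) :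
    ⨍ x in s, |f x - g x| ∂μ ≤ ⨍ x in s, |f x| ∂μ + ⨍ x in s, |g x| ∂μ := by
  simp only [setAverage_eq, smul_eq_mul, ← mul_add]
  refine mul_le_mul_of_nonneg_left ?_ (inv_nonneg.2 measureReal_nonneg)
  rw [← integral_add hf.abs hg.abs]
  exact integral_mono (hf.sub hg).abs (hf.abs.add hg.abs) fun x => abs_sub _ _

theorem setAverage_le_mul_setAverage_of_subset (hf : 0 ≤ᵐ[μ.restrict t] f)
    (hft : IntegrableOn f t μ) (hst : s ⊆ t) (ht : μ t ≠ ⊤) :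
    ⨍ x in s, f x ∂μ ≤ μ.real t / μ.real s * ⨍ x in t, f x ∂μ := by
  rcases (measureReal_nonneg (μ := μ) (s := s)).eq_or_lt with hs | hs
  · simp [setAverage_eq, ← hs]
  have ht₀ : 0 < μ.real t := hs.trans_le (measureReal_mono hst ht)
  rw [setAverage_eq, setAverage_eq, smul_eq_mul, smul_eq_mul, div_mul_eq_mul_div,
    mul_inv_cancel_left₀ ht₀.ne', inv_mul_eq_div]
  exact div_le_div_of_nonneg_right (setIntegral_mono_set hft hf hst.eventuallyLE) hs.le

end Average

theorem Continuous.integrableOn_ball {X F : Type*} [PseudoMetricSpace X] [ProperSpace X]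
    [MeasurableSpace X] [OpensMeasurableSpace X] {μ : Measure X} [IsFiniteMeasureOnCompacts μ]
    [NormedAddCommGroup F] {f : X → F} (hf : Continuous f) (c : X) (r : ℝ) :
    IntegrableOn f (ball c r) μ :=
  (hf.locallyIntegrable.integrableOn_isCompact (isCompact_closedBall c r)).mono_set
    ball_subset_closedBall

theorem addHaar_real_ball_div_addHaar_real_ball {E : Type*} [NormedAddCommGroup E]
    [NormedSpace ℝ E] [FiniteDimensional ℝ E] [MeasurableSpace E] [BorelSpace E] (μ : Measure E)
    [μ.IsAddHaarMeasure] (x y : E) {r R : ℝ} (hr : 0 < r) (hR : 0 < R) :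
    μ.real (ball x R) / μ.real (ball y r) = (R / r) ^ finrank ℝ E := by
  have hunit : μ.real (ball (0 : E) 1) ≠ 0 :=
    (measureReal_ne_zero_iff measure_ball_lt_top.ne).2 (measure_ball_pos μ 0 one_pos).ne'
  simp only [measureReal_def, Measure.addHaar_ball_of_pos μ _ hr,
    Measure.addHaar_ball_of_pos μ _ hR, ENNReal.toReal_mul,
    ENNReal.toReal_ofReal (pow_nonneg hr.le _),
    ENNReal.toReal_ofReal (pow_nonneg hR.le _)] at hunit ⊢
  rw [mul_div_mul_right _ _ hunit, div_pow]

section InnerProductSpace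

variable {E : Type*} [NormedAddCommGroup E] [InnerProductSpace ℝ E]

def affineRemainder (u : E → ℝ) (b : E → E) (x z : E) : ℝ :=
  u z - (u x + ⟪b x, z - x⟫)

theorem affineRemainder_sub_affineRemainder (u : E → ℝ) (b : E → E) (x y z : E) :
    affineRemainder u b x z - affineRemainder u b y z =
      affineRemainder u b x y + ⟪b y - b x, z - y⟫ := by
  simp only [affineRemainder, inner_sub_left, inner_sub_right]
  ring

variable [FiniteDimensional ℝ E] [MeasurableSpace E] [BorelSpace E] (μ : Measure E)
  [μ.IsAddHaarMeasure]

theorem setIntegral_ball_inner_sub_center (c d : E) (r : ℝ) :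
    ∫ x in ball c r, ⟪d, x - c⟫ ∂μ = 0 := by
  -- the point reflection `x ↦ 2c - x` preserves `μ` and the ball, and negates the integrand
  have hreflect := (Measure.measurePreserving_sub_left μ (c + c)).setIntegral_preimage_emb
    (MeasurableEquiv.subLeft (c + c)).measurableEmbedding (fun x => ⟪d, x - c⟫) (ball c r)
  have hball : (fun x => c + c - x) ⁻¹' ball c r = ball c r := by
    ext z
    simp only [mem_preimage, mem_ball, dist_eq_norm, show c + c - z - c = -(z - c) by abel,
      norm_neg]
  simp only [hball, show ∀ x, c + c - x - c = -(x - c) from fun x => by abel, inner_neg_right,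
    integral_neg] at hreflect
  linarith

theorem setAverage_ball_affine (c d : E) (a : ℝ) {r : ℝ} (hr : 0 < r) :
    ⨍ x in ball c r, (a + ⟪d, x - c⟫) ∂μ = a := by
  have hinner : IntegrableOn (fun x => ⟪d, x - c⟫) (ball c r) μ :=
    (by fun_prop : Continuous fun x : E => ⟪d, x - c⟫).integrableOn_ball c r
  have hvol : μ.real (ball c r) ≠ 0 :=
    (measureReal_ne_zero_iff measure_ball_lt_top.ne).2 (measure_ball_pos μ c hr).ne'
  rw [setAverage_eq,
    integral_add (f := fun _ => a) (integrableOn_const measure_ball_lt_top.ne) hinner,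
    setIntegral_ball_inner_sub_center, setIntegral_const, add_zero, smul_eq_mul, smul_eq_mul,
    inv_mul_cancel_left₀ hvol]

variable {μ} in
theorem integrableOn_affineRemainder {u : E → ℝ} {c : E} {r : ℝ}
    (hu : IntegrableOn u (ball c r) μ) (b : E → E) (x : E) :
    IntegrableOn (affineRemainder u b x) (ball c r) μ :=
  hu.sub ((by fun_prop : Continuous fun z : E => u x + ⟪b x, z - x⟫).integrableOn_ball c r)

theorem abs_affineRemainder_le_setAverage {u : E → ℝ} (b : E → E) {x y : E} (hxy : x ≠ y)
    (hu : IntegrableOn u (ball x (2 * dist y x)) μ) :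
    |affineRemainder u b x y| ≤
      2 ^ finrank ℝ E * ⨍ z in ball x (2 * dist y x), |affineRemainder u b x z| ∂μ +
        ⨍ z in ball y (dist y x), |affineRemainder u b y z| ∂μ := by
  set ρ := dist y x
  have hρ : 0 < ρ := dist_pos.2 hxy.symm
  have hsub : ball y ρ ⊆ ball x (2 * ρ) := ball_subset_ball' (by linarith)
  have hux := integrableOn_affineRemainder hu b x
  have hshrink : ⨍ z in ball y ρ, |affineRemainder u b x z| ∂μ ≤
      2 ^ finrank ℝ E * ⨍ z in ball x (2 * ρ), |affineRemainder u b x z| ∂μ := by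
    have := setAverage_le_mul_setAverage_of_subset (ae_of_all _ fun z => abs_nonneg _) hux.abs
      hsub measure_ball_lt_top.ne
    rwa [addHaar_real_ball_div_addHaar_real_ball μ x y hρ (by positivity),
      mul_div_cancel_right₀ _ hρ.ne'] at this
  calc |affineRemainder u b x y|
      = |⨍ z in ball y ρ, (affineRemainder u b x y + ⟪b y - b x, z - y⟫) ∂μ| := by
        rw [setAverage_ball_affine μ _ _ _ hρ]
    _ ≤ ⨍ z in ball y ρ, |affineRemainder u b x y + ⟪b y - b x, z - y⟫| ∂μ :=
        abs_setAverage_le_setAverage_abs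
    _ = ⨍ z in ball y ρ, |affineRemainder u b x z - affineRemainder u b y z| ∂μ := by
        simp only [affineRemainder_sub_affineRemainder]
    _ ≤ ⨍ z in ball y ρ, |affineRemainder u b x z| ∂μ +
          ⨍ z in ball y ρ, |affineRemainder u b y z| ∂μ :=
        setAverage_abs_sub_le (hux.mono_set hsub)
          (integrableOn_affineRemainder (hu.mono_set hsub) b y)
    _ ≤ _ := add_le_add_left hshrink _

end InnerProductSpace

theorem first_order_taylor_estimate_from_affine_approximation_general
    (n : ℕ) :
    ∃ C : ℝ, 0 < C ∧
      ∀ (u : EuclideanSpace ℝ (Fin n) → ℝ),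
        IntegrableOn u (ball (0 : EuclideanSpace ℝ (Fin n)) 1) →
        ∀ (δ : ℝ → ℝ),
          (∀ r ∈ Ioo (0:ℝ) 1, 0 < δ r) →
          (∀ r s : ℝ, 0 < r → r ≤ s → s < 1 → δ r ≤ δ s) →
          Tendsto δ (𝓝[>] (0:ℝ)) (𝓝 0) →
          ∀ (b : EuclideanSpace ℝ (Fin n) → EuclideanSpace ℝ (Fin n)),
            (∀ xb ∈ ball (0 : EuclideanSpace ℝ (Fin n)) (1/4 : ℝ), ∀ r ∈ Ioo (0:ℝ) (1/2 : ℝ),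
              ⨍ x in ball xb r, |u x - (u xb + ⟪b xb, x - xb⟫)| ≤ r * δ r) →
            ∀ xb ∈ ball (0 : EuclideanSpace ℝ (Fin n)) (1/4 : ℝ),
              ∀ yb ∈ ball (0 : EuclideanSpace ℝ (Fin n)) (1/4 : ℝ),
                xb ≠ yb → dist xb yb < 1/8 →
                  |u yb - (u xb + ⟪b xb, yb - xb⟫)| ≤ C * dist yb xb * δ (4 * dist yb xb) := by
  refine ⟨2 ^ (n + 1) + 1, by positivity, ?_⟩
  intro u hu δ _ hδmono _ b hb xb hxb yb hyb hxy hd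
  set ρ := dist yb xb
  have hρ : 0 < ρ := dist_pos.2 hxy.symm
  have hρ8 : ρ < 1 / 8 := (dist_comm yb xb).trans_lt hd
  have hball : ball xb (2 * ρ) ⊆ ball 0 1 :=
    ball_subset_ball' (by rw [mem_ball] at hxb; linarith)
  have hremainder := abs_affineRemainder_le_setAverage volume b hxy (hu.mono_set hball)
  rw [finrank_euclideanSpace_fin] at hremainder
  have hx := hb xb hxb (2 * ρ) ⟨by positivity, by linarith⟩
  have hy := hb yb hyb ρ ⟨hρ, by linarith⟩
  have hδ₂ : δ (2 * ρ) ≤ δ (4 * ρ) := hδmono _ _ (by positivity) (by linarith) (by linarith)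
  have hδ₁ : δ ρ ≤ δ (4 * ρ) := hδmono _ _ hρ (by linarith) (by linarith)
  calc |u yb - (u xb + ⟪b xb, yb - xb⟫)|
      ≤ 2 ^ n * (2 * ρ * δ (2 * ρ)) + ρ * δ ρ :=
        hremainder.trans (add_le_add (mul_le_mul_of_nonneg_left hx (by positivity)) hy)
    _ ≤ 2 ^ n * (2 * ρ * δ (4 * ρ)) + ρ * δ (4 * ρ) := by gcongr
    _ = (2 ^ (n + 1) + 1) * ρ * δ (4 * ρ) := by ring

/-- If `u` is integrable on `B₁ ⊂ ℝⁿ`, `δ : (0,1) → (0,∞)` is increasing with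
`δ(r) → 0` as `r → 0`, and for every `xb ∈ B_{1/4}` there is `b(xb) ∈ ℝⁿ` with
`⨍_{B_r(xb)} |u(x) - [u(xb) + b(xb)·(x - xb)]| ≤ r δ(r)` for all `0 < r < 1/2`, then for a
dimensional constant `C`, for all `xb, yb ∈ B_{1/4}` with `0 < |xb - yb| < 1/8`,
`|u(yb) - [u(xb) + b(xb)·(yb - xb)]| ≤ C |yb - xb| δ(4|yb - xb|)`. -/
theorem first_order_taylor_estimate_from_affine_approximation
    (n : ℕ) (hn : 1 ≤ n) :
    ∃ C : ℝ, 0 < C ∧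
      ∀ (u : EuclideanSpace ℝ (Fin n) → ℝ),
        IntegrableOn u (ball (0 : EuclideanSpace ℝ (Fin n)) 1) →
        ∀ (δ : ℝ → ℝ),
          (∀ r ∈ Ioo (0:ℝ) 1, 0 < δ r) →
          (∀ r s : ℝ, 0 < r → r ≤ s → s < 1 → δ r ≤ δ s) →
          Tendsto δ (𝓝[>] (0:ℝ)) (𝓝 0) →
          ∀ (b : EuclideanSpace ℝ (Fin n) → EuclideanSpace ℝ (Fin n)),
            (∀ xb ∈ ball (0 : EuclideanSpace ℝ (Fin n)) (1/4 : ℝ), ∀ r ∈ Ioo (0:ℝ) (1/2 : ℝ),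
              ⨍ x in ball xb r, |u x - (u xb + ⟪b xb, x - xb⟫)| ≤ r * δ r) →
            ∀ xb ∈ ball (0 : EuclideanSpace ℝ (Fin n)) (1/4 : ℝ),
              ∀ yb ∈ ball (0 : EuclideanSpace ℝ (Fin n)) (1/4 : ℝ),
                xb ≠ yb → dist xb yb < 1/8 →
                  |u yb - (u xb + ⟪b xb, yb - xb⟫)| ≤ C * dist yb xb * δ (4 * dist yb xb) :=
  first_order_taylor_estimate_from_affine_approximation_general n
end

section
/- Let φ : (0,1) → [0,∞) be measurable and satisfy, for some μ > 1, max_{r/2 ≤ s ≤ 2r} φ(s) ≤ μ φ(r) whenever [r/2, 2r] ⊂ (0,1), together with ∫_0^1 r^{-1} φ(r) dr < ∞. Then φ(r) → 0 as r → 0⁺. -/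
open MeasureTheory Metric Set Filter
open scoped Topology

/-!
Comparing `φ r` with `φ s` for `s ∈ (r, 2r]` gives `φ r ≤ 2μ ∫_r^{2r} φ(s)/s ds`, and the right-hand
side tends to `0` with `r` by absolute continuity of the integral of the integrable function
`φ(s)/s`.
-/

lemma tendsto_setIntegral_Ioc_two_mul_nhdsGT_zero {f : ℝ → ℝ} {a : ℝ} (ha : 0 < a)
    (hf : IntegrableOn f (Ioo 0 a)) :
    Tendsto (fun r => ∫ s in Ioc r (2 * r), f s) (𝓝[>] 0) (𝓝 0) := by
  have hvol : Tendsto (fun r => volume.restrict (Ioo 0 a) (Ioc r (2 * r))) (𝓝[>] 0) (𝓝 0) := by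
    have hr : Tendsto (fun r : ℝ => ENNReal.ofReal r) (𝓝[>] 0) (𝓝 0) := by
      simpa using (ENNReal.continuous_ofReal.tendsto 0).mono_left nhdsWithin_le_nhds
    refine tendsto_of_tendsto_of_tendsto_of_le_of_le tendsto_const_nhds hr (fun _ => zero_le)
      fun r => (Measure.restrict_apply_le _ _).trans_eq ?_
    rw [Real.volume_Ioc]
    ring_nf
  refine (hf.tendsto_setIntegral_nhds_zero hvol).congr' ?_
  filter_upwards [Ioo_mem_nhdsGT (half_pos ha)] with r hr
  have hsub : Ioc r (2 * r) ⊆ Ioo 0 a := fun s hs => ⟨hr.1.trans hs.1, by linarith [hs.2, hr.2]⟩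
  rw [Measure.restrict_restrict measurableSet_Ioc, inter_eq_left.mpr hsub]

lemma le_two_mul_mul_setIntegral_Ioc_div {φ : ℝ → ℝ} {K r : ℝ} (hr : 0 < r) (hK : 0 ≤ K)
    (hφ : ∀ s ∈ Ioc r (2 * r), 0 ≤ φ s ∧ φ r ≤ K * φ s)
    (hint : IntegrableOn (fun s => φ s / s) (Ioc r (2 * r))) :
    φ r ≤ 2 * K * ∫ s in Ioc r (2 * r), φ s / s := by
  have hpointwise : ∀ s ∈ Ioc r (2 * r), φ r / (2 * r) ≤ K * (φ s / s) := by
    rintro s ⟨hrs, hs2r⟩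
    obtain ⟨hφs, hφrs⟩ := hφ s ⟨hrs, hs2r⟩
    calc φ r / (2 * r) ≤ K * φ s / (2 * r) := by gcongr
      _ ≤ K * φ s / s := by gcongr; linarith
      _ = K * (φ s / s) := mul_div_assoc _ _ _
  have hlower := setIntegral_ge_of_const_le_real measurableSet_Ioc (by simp) hpointwise
    (hint.const_mul K)
  rw [integral_const_mul, Real.volume_real_Ioc_of_le (by linarith)] at hlower
  have : φ r / (2 * r) * (2 * r - r) = φ r / 2 := by field_simp; ring
  linarith

theorem dini_condition_implies_vanishing_at_zero_general
    (φ : ℝ → ℝ)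
    (hnonneg : ∀ r ∈ Ioo (0:ℝ) 1, 0 ≤ φ r)
    (μ : ℝ) (hμ : 1 < μ)
    (hdoubling : ∀ r s : ℝ, 0 < r → 2 * r < 1 → r / 2 ≤ s → s ≤ 2 * r → φ s ≤ μ * φ r)
    (hdini : IntegrableOn (fun r => φ r / r) (Ioo (0:ℝ) 1)) :
    Tendsto φ (𝓝[>] (0:ℝ)) (𝓝 0) := by
  have hbound := (tendsto_setIntegral_Ioc_two_mul_nhdsGT_zero one_pos hdini).const_mul (2 * μ)
  rw [mul_zero] at hbound
  have hsmall : Ioo (0:ℝ) (1 / 4) ∈ 𝓝[>] 0 := Ioo_mem_nhdsGT (by norm_num)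
  refine tendsto_of_tendsto_of_tendsto_of_le_of_le' tendsto_const_nhds hbound ?_ ?_
  · filter_upwards [hsmall] with r hr
    exact hnonneg r ⟨hr.1, by linarith [hr.2]⟩
  · filter_upwards [hsmall] with r ⟨hr0, hr⟩
    refine le_two_mul_mul_setIntegral_Ioc_div hr0 (by linarith) (fun s ⟨hrs, hs⟩ => ?_)
      (hdini.mono_set fun s hs => ⟨hr0.trans hs.1, by linarith [hs.2]⟩)
    exact ⟨hnonneg s ⟨hr0.trans hrs, by linarith⟩,
      hdoubling s r (hr0.trans hrs) (by linarith) (by linarith) (by linarith)⟩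

/-- If `φ : (0,1) → [0,∞)` is measurable, satisfies
`max_{r/2 ≤ s ≤ 2r} φ(s) ≤ μ φ(r)` (for some `μ > 1`) whenever `[r/2, 2r] ⊂ (0,1)`, and
`∫_0^1 r⁻¹ φ(r) dr < ∞`, then `φ(r) → 0` as `r → 0⁺`. -/
theorem dini_condition_implies_vanishing_at_zero
    (φ : ℝ → ℝ) (hmeas : Measurable φ)
    (hnonneg : ∀ r ∈ Ioo (0:ℝ) 1, 0 ≤ φ r)
    (μ : ℝ) (hμ : 1 < μ)
    (hdoubling : ∀ r s : ℝ, 0 < r → 2 * r < 1 → r / 2 ≤ s → s ≤ 2 * r → φ s ≤ μ * φ r)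
    (hdini : IntegrableOn (fun r => φ r / r) (Ioo (0:ℝ) 1)) :
    Tendsto φ (𝓝[>] (0:ℝ)) (𝓝 0) :=
  dini_condition_implies_vanishing_at_zero_general φ hnonneg μ hμ hdoubling hdini
end

section
/- Let φ : (0,1) → [0,∞) be measurable and satisfy, for some μ > 1, max_{r/2 ≤ s ≤ 2r} φ(s) ≤ μ φ(r) whenever [r/2, 2r] ⊂ (0,1). Then there is a constant C depending only on μ such that for every integer k ≥ 1, ∑_{j=1}^{k} 4^{j} φ(4^{-j}) ≤ C ∫_{4^{-(k+1)}}^{1/4} r^{-2} φ(r) dr. -/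
/-! On a block `[b/4, b]` every point `r` is within a factor 2 of the midpoint `b/2`, so two
Harnack steps give `φ b ≤ μ² φ r` there (and one step bounds `φ` above, hence `φ r / r²` is
integrable). Therefore `∫_{b/4}^{b} φ r / r² ≥ μ⁻² φ b (4/b - 1/b) = 3 μ⁻² b⁻¹ φ b`, and the
blocks with `b = 4⁻ʲ`, `j = 1, …, k`, tile `[4^{-(k+1)}, 1/4]`; so `C = μ²/3` works. -/

open MeasureTheory Set

theorem integral_inv_sq {a b : ℝ} (ha : 0 < a) (hab : a ≤ b) :
    ∫ r in a..b, (r ^ 2)⁻¹ = a⁻¹ - b⁻¹ := by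
  have h0 : (0 : ℝ) ∉ uIcc a b := by
    rw [uIcc_of_le hab]; exact fun h ↦ h.1.not_gt ha
  have := integral_zpow (n := -2) (Or.inr ⟨by norm_num, h0⟩)
  norm_num at this
  rw [this, div_neg, div_one, neg_sub]

theorem mul_inv_sub_inv_le_integral_div_sq {f : ℝ → ℝ} {a b c : ℝ} (ha : 0 < a) (hab : a ≤ b)
    (hf : IntegrableOn (fun r ↦ f r / r ^ 2) (Icc a b)) (hc : ∀ r ∈ Icc a b, c ≤ f r) :
    c * (a⁻¹ - b⁻¹) ≤ ∫ r in a..b, f r / r ^ 2 := by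
  have h0 : ∀ r ∈ uIcc a b, r ^ 2 ≠ 0 := by
    rw [uIcc_of_le hab]; exact fun r hr ↦ pow_ne_zero 2 (ha.trans_le hr.1).ne'
  rw [← integral_inv_sq ha hab, ← intervalIntegral.integral_const_mul]
  refine intervalIntegral.integral_mono_on hab
    ((intervalIntegral.intervalIntegrable_inv h0 (by fun_prop)).const_mul c)
    ((intervalIntegrable_iff_integrableOn_Icc_of_le hab).2 hf) ?_
  intro r hr
  have : 0 < r := ha.trans_le hr.1
  rw [div_eq_mul_inv]
  exact mul_le_mul_of_nonneg_right (hc r hr) (by positivity)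

def HarnackOnUnitInterval (μ : ℝ) (φ : ℝ → ℝ) : Prop :=
  ∀ r s : ℝ, 0 < r → 2 * r < 1 → r / 2 ≤ s → s ≤ 2 * r → φ s ≤ μ * φ r

namespace HarnackOnUnitInterval

variable {μ b r : ℝ} {φ : ℝ → ℝ}

theorem le_mul_half (hH : HarnackOnUnitInterval μ φ) (hb0 : 0 < b) (hb1 : b < 1)
    (hr : r ∈ Icc (b / 4) b) : φ r ≤ μ * φ (b / 2) :=
  hH _ _ (by linarith) (by linarith) (by linarith [hr.1]) (by linarith [hr.2])

theorem half_le_mul (hH : HarnackOnUnitInterval μ φ) (hb0 : 0 < b) (hb : 2 * b < 1)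
    (hr : r ∈ Icc (b / 4) b) : φ (b / 2) ≤ μ * φ r :=
  hH _ _ (by linarith [hr.1]) (by linarith [hr.2]) (by linarith [hr.2]) (by linarith [hr.1])

theorem le_sq_mul (hH : HarnackOnUnitInterval μ φ) (hμ : 0 ≤ μ) (hb0 : 0 < b) (hb : 2 * b < 1)
    (hr : r ∈ Icc (b / 4) b) : φ b ≤ μ ^ 2 * φ r :=
  calc φ b ≤ μ * φ (b / 2) := hH.le_mul_half hb0 (by linarith) ⟨by linarith, le_rfl⟩
    _ ≤ μ * (μ * φ r) := mul_le_mul_of_nonneg_left (hH.half_le_mul hb0 hb hr) hμ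
    _ = μ ^ 2 * φ r := by ring

theorem integrableOn_div_sq (hH : HarnackOnUnitInterval μ φ) (hφm : Measurable φ)
    (hφ0 : ∀ r ∈ Ioo (0 : ℝ) 1, 0 ≤ φ r) (hb0 : 0 < b) (hb1 : b < 1) :
    IntegrableOn (fun r ↦ φ r / r ^ 2) (Icc (b / 4) b) := by
  refine Measure.integrableOn_of_bounded (M := μ * φ (b / 2) / (b / 4) ^ 2)
    measure_Icc_lt_top.ne (hφm.div (measurable_id.pow_const 2)).aestronglyMeasurable ?_
  filter_upwards [ae_restrict_mem measurableSet_Icc] with r hr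
  have hr0 : 0 < r := by linarith [hr.1]
  have hφr : 0 ≤ φ r := hφ0 r ⟨hr0, by linarith [hr.2]⟩
  rw [Real.norm_of_nonneg (by positivity)]
  exact div_le_div₀ (hφr.trans (hH.le_mul_half hb0 hb1 hr)) (hH.le_mul_half hb0 hb1 hr)
    (by positivity) (pow_le_pow_left₀ (by positivity) hr.1 2)

theorem inv_mul_le_integral_div_sq (hH : HarnackOnUnitInterval μ φ) (hμ : 0 < μ)
    (hφm : Measurable φ) (hφ0 : ∀ r ∈ Ioo (0 : ℝ) 1, 0 ≤ φ r) (hb0 : 0 < b) (hb : 2 * b < 1) :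
    b⁻¹ * φ b ≤ μ ^ 2 / 3 * ∫ r in b / 4..b, φ r / r ^ 2 := by
  have hlower : ∀ r ∈ Icc (b / 4) b, φ b / μ ^ 2 ≤ φ r := fun r hr ↦ by
    rw [div_le_iff₀' (by positivity)]; exact hH.le_sq_mul hμ.le hb0 hb hr
  have := mul_inv_sub_inv_le_integral_div_sq (by positivity) (by linarith)
    (hH.integrableOn_div_sq hφm hφ0 hb0 (by linarith)) hlower
  calc b⁻¹ * φ b = μ ^ 2 / 3 * (φ b / μ ^ 2 * ((b / 4)⁻¹ - b⁻¹)) := by field_simp; ring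
    _ ≤ _ := mul_le_mul_of_nonneg_left this (by positivity)

end HarnackOnUnitInterval

theorem intervalIntegral.sum_integral_adjacent_intervals_Icc_rev {ν : Measure ℝ} {f : ℝ → ℝ}
    {a : ℕ → ℝ} {m n : ℕ} (hmn : m ≤ n + 1)
    (hint : ∀ k ∈ Finset.Icc m n, IntervalIntegrable f ν (a (k + 1)) (a k)) :
    ∑ k ∈ Finset.Icc m n, ∫ x in a (k + 1)..a k, f x ∂ν = ∫ x in a (n + 1)..a m, f x ∂ν := by
  rw [Finset.sum_congr rfl fun k _ ↦ integral_symm (a k) (a (k + 1)), Finset.sum_neg_distrib]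
  rw [← Finset.Ico_add_one_right_eq_Icc, sum_integral_adjacent_intervals_Ico hmn
    fun k hk ↦ (hint k (Finset.mem_Icc.2 ⟨hk.1, Nat.lt_succ_iff.1 hk.2⟩)).symm,
    integral_symm, neg_neg]

/-- If `φ : (0,1) → [0,∞)` is measurable and satisfies
`max_{r/2 ≤ s ≤ 2r} φ(s) ≤ μ φ(r)` (for some `μ > 1`) whenever `[r/2, 2r] ⊂ (0,1)`, then
there is `C = C(μ)` such that for every `k ≥ 1`,
`∑_{j=1}^k 4ʲ φ(4⁻ʲ) ≤ C ∫_{4^{-(k+1)}}^{1/4} r⁻² φ(r) dr`. -/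
theorem dyadic_weighted_sum_bounded_by_integral
    (μ : ℝ) (hμ : 1 < μ) :
    ∃ C : ℝ, 0 < C ∧
      ∀ φ : ℝ → ℝ, Measurable φ → (∀ r ∈ Ioo (0:ℝ) 1, 0 ≤ φ r) →
        (∀ r s : ℝ, 0 < r → 2 * r < 1 → r / 2 ≤ s → s ≤ 2 * r → φ s ≤ μ * φ r) →
        ∀ k : ℕ, 1 ≤ k →
          ∑ j ∈ Finset.Icc 1 k, (4:ℝ) ^ (j:ℤ) * φ ((4:ℝ) ^ (-(j:ℤ)))
            ≤ C * ∫ r in Icc ((4:ℝ) ^ (-((k:ℤ) + 1))) (1/4 : ℝ), φ r / r ^ 2 := by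
  have hμ0 : 0 < μ := one_pos.trans hμ
  refine ⟨μ ^ 2 / 3, by positivity, fun φ hφm hφ0 (hH : HarnackOnUnitInterval μ φ) k hk ↦ ?_⟩
  set b : ℕ → ℝ := fun j ↦ (4 : ℝ) ^ (-(j : ℤ)) with hb_def
  have hb0 (j : ℕ) : 0 < b j := zpow_pos (by norm_num) _
  have hb_succ (j : ℕ) : b (j + 1) = b j / 4 := by
    simp only [hb_def, Nat.cast_succ, neg_add]
    rw [zpow_add₀ four_ne_zero, zpow_neg_one, div_eq_mul_inv]
  have hb_le (j : ℕ) (hj : 1 ≤ j) : b j ≤ 1 / 4 := by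
    calc b j ≤ (4 : ℝ) ^ (-1 : ℤ) := zpow_le_zpow_right₀ (by norm_num) (by omega)
      _ = 1 / 4 := by norm_num
  have hb_small (j : ℕ) (hj : j ∈ Finset.Icc 1 k) : 2 * b j < 1 := by
    linarith [hb_le j (Finset.mem_Icc.1 hj).1]
  have hb_inv (j : ℕ) : (b j)⁻¹ = (4 : ℝ) ^ (j : ℤ) := by simp [hb_def]
  calc ∑ j ∈ Finset.Icc 1 k, (4:ℝ) ^ (j:ℤ) * φ (b j)
      ≤ ∑ j ∈ Finset.Icc 1 k, μ ^ 2 / 3 * ∫ r in b (j + 1)..b j, φ r / r ^ 2 := by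
        refine Finset.sum_le_sum fun j hj ↦ ?_
        rw [hb_succ, ← hb_inv]
        exact hH.inv_mul_le_integral_div_sq hμ0 hφm hφ0 (hb0 j) (hb_small j hj)
    _ = μ ^ 2 / 3 * ∫ r in b (k + 1)..b 1, φ r / r ^ 2 := by
        rw [← Finset.mul_sum, intervalIntegral.sum_integral_adjacent_intervals_Icc_rev (by omega)]
        intro j hj
        rw [hb_succ, intervalIntegrable_iff_integrableOn_Icc_of_le (by linarith [hb0 j])]
        exact hH.integrableOn_div_sq hφm hφ0 (hb0 j) (by linarith [hb0 j, hb_small j hj])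
    _ = _ := by
        have hbk : b (k + 1) = (4 : ℝ) ^ (-((k : ℤ) + 1)) := by
          simp only [hb_def]; push_cast; rfl
        have hb1 : b 1 = 1 / 4 := by norm_num [hb_def]
        rw [intervalIntegral.integral_of_le (hb1 ▸ hb_le (k + 1) (by omega)), hbk, hb1,
          integral_Icc_eq_integral_Ioc]
end
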